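/- Let k be a field of characteristic zero, S = k[x,y,z], and N = (x^2, y^2)/(x^4, y^4, z^3), a graded S-module. Then dim_k N_3 = dim_k N_6 = 6, and the multiplication map ×(x+y+z)^3 : N_3 → N_6 is not injective (the class of (x−y)(x^2+y^2) lies in its kernel); consequently N does not have the strong Lefschetz property. -/

import Mathlib

open MvPolynomial

/-- The degree-`i` homogeneous component of the graded `k[x₁,…,xₙ]`-module `I/J`. -/
noncomputable def gradedPiece {k : Type} [Field k] {n : ℕ}
    (J I : Ideal (MvPolynomial (Fin n) k)) (i : ℕ) :
    Submodule k (MvPolynomial (Fin n) k ⧸ J) :=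
  Submodule.map (Ideal.Quotient.mkₐ k J).toLinearMap
    (Submodule.restrictScalars k I ⊓ homogeneousSubmodule (Fin n) k i)

/-- `ℓ` is a strong Lefschetz element for the graded module `I/J`. -/
def IsSLE {k : Type} [Field k] {n : ℕ} (J I : Ideal (MvPolynomial (Fin n) k))
    (ℓ : MvPolynomial (Fin n) k) : Prop :=
  ∀ d : ℕ, 0 < d → ∀ i : ℕ,
    (∀ m ∈ gradedPiece J I i, Ideal.Quotient.mk J (ℓ ^ d) * m = 0 → m = 0) ∨
    (∀ m' ∈ gradedPiece J I (i + d), ∃ m ∈ gradedPiece J I i,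
      Ideal.Quotient.mk J (ℓ ^ d) * m = m')

/-- The graded module `I/J` has the strong Lefschetz property. -/
def HasSLP {k : Type} [Field k] {n : ℕ} (J I : Ideal (MvPolynomial (Fin n) k)) : Prop :=
  ∃ ℓ ∈ homogeneousSubmodule (Fin n) k 1, IsSLE J I ℓ

/-!
Both `N₃` and `N₆` are spanned by the six monomials of `(x², y²)` of that degree lying outside
`(x⁴, y⁴, z³)`, so `×ℓ³ : N₃ → N₆` has maximal rank only if it is injective. It never is: for
`ℓ = ax + by + cz` put `u = ax`, `v = by`, `w = cz`. Then `(u + v)(u - v)(u² + v²) = u⁴ - v⁴` and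
`w³` lie in `(x⁴, y⁴, z³)`, and `ℓ³ = (u + v)(…) + w³`, so `ℓ³` kills `(u - v)(u² + v²)`, whose
`x³`- and `y³`-coefficients are `a³` and `-b³`. If `a = b = 0`, then `ℓ³` kills all of `N₃`.
-/

open Module

section GradedPiece

variable {k : Type} [Field k] {n : ℕ} {J I : Ideal (MvPolynomial (Fin n) k)}

theorem mk_mem_gradedPiece {p : MvPolynomial (Fin n) k} {i : ℕ} (hpI : p ∈ I)
    (hp : p.IsHomogeneous i) : Ideal.Quotient.mk J p ∈ gradedPiece J I i :=
  ⟨p, ⟨hpI, hp⟩, rfl⟩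

theorem mk_mul_mem_gradedPiece {ℓ : MvPolynomial (Fin n) k} {d i : ℕ} (hℓ : ℓ.IsHomogeneous d)
    {x : MvPolynomial (Fin n) k ⧸ J} (hx : x ∈ gradedPiece J I i) :
    Ideal.Quotient.mk J ℓ * x ∈ gradedPiece J I (i + d) := by
  obtain ⟨p, ⟨hpI, hp⟩, rfl⟩ := hx
  change Ideal.Quotient.mk J ℓ * Ideal.Quotient.mk J p ∈ _
  rw [← map_mul]
  exact mk_mem_gradedPiece (I.mul_mem_left ℓ hpI) (add_comm d i ▸ hℓ.mul hp)

instance gradedPiece.finiteDimensional (i : ℕ) : FiniteDimensional k (gradedPiece J I i) := by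
  have : FiniteDimensional k (homogeneousSubmodule (Fin n) k i) :=
    Module.Finite.iff_fg.mpr (homogeneousSubmodule_fg _ _ i)
  exact Module.Finite.map _ _

theorem not_isSLE_of_mul_eq_zero {ℓ : MvPolynomial (Fin n) k} (hℓ : ℓ.IsHomogeneous 1)
    {d i : ℕ} (hd : 0 < d)
    (hrank : finrank k (gradedPiece J I i) ≤ finrank k (gradedPiece J I (i + d)))
    {x : MvPolynomial (Fin n) k ⧸ J} (hx : x ∈ gradedPiece J I i) (hx0 : x ≠ 0)
    (hℓx : Ideal.Quotient.mk J (ℓ ^ d) * x = 0) : ¬ IsSLE J I ℓ := by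
  intro hsle
  rcases hsle d hd i with hinj | hsurj
  · exact hx0 (hinj x hx hℓx)
  · let L : gradedPiece J I i →ₗ[k] gradedPiece J I (i + d) :=
      (LinearMap.mulLeft k (Ideal.Quotient.mk J (ℓ ^ d))).restrict
        fun y hy => by simpa using mk_mul_mem_gradedPiece (hℓ.pow d) hy
    have hL : Function.Surjective L := fun ⟨y, hy⟩ => by
      obtain ⟨z, hz, rfl⟩ := hsurj y hy
      exact ⟨⟨z, hz⟩, rfl⟩
    have hLinj : Function.Injective L :=
      (LinearMap.injective_iff_surjective_of_finrank_eq_finrank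
        ((LinearMap.finrank_le_finrank_of_surjective hL).antisymm hrank).symm).mpr hL
    have hLx : L ⟨x, hx⟩ = L 0 := Subtype.ext (by simpa [L] using hℓx)
    exact hx0 (congrArg Subtype.val (hLinj hLx))

end GradedPiece

section MonomialIdeal

variable {k : Type} [Field k] {n : ℕ}

theorem monomial_mem_span_monomial_image {T : Set (Fin n →₀ ℕ)} {m : Fin n →₀ ℕ} (c : k)
    (hm : ∃ s ∈ T, s ≤ m) : monomial m c ∈ Ideal.span ((fun s => monomial s (1 : k)) '' T) :=
  mem_ideal_span_monomial_image.mpr fun _ hm' => Finset.mem_singleton.mp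
    (support_monomial_subset hm') ▸ hm

variable (T U : Set (Fin n →₀ ℕ)) (d : ℕ)

theorem gradedPiece_span_monomial_image_eq_map (B : Set (Fin n →₀ ℕ))
    (hB : B = {m | m.degree = d ∧ ∃ s ∈ U, s ≤ m} \ {m | ∃ s ∈ T, s ≤ m}) :
    gradedPiece (Ideal.span ((fun s => monomial s (1 : k)) '' T))
        (Ideal.span ((fun s => monomial s (1 : k)) '' U)) d =
      (restrictSupport k B).map
        (Ideal.Quotient.mkₐ k (Ideal.span ((fun s => monomial s (1 : k)) '' T))).toLinearMap := by
  subst hB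
  refine le_antisymm ?_ (Submodule.map_mono fun p hp => ⟨?_, ?_⟩)
  · rintro _ ⟨p, ⟨hpI, hp⟩, rfl⟩
    rw [as_sum p, map_sum]
    refine Submodule.sum_mem _ fun m hm => ?_
    by_cases hmT : ∃ s ∈ T, s ≤ m
    · rw [AlgHom.toLinearMap_apply, Ideal.Quotient.mkₐ_eq_mk,
        Ideal.Quotient.eq_zero_iff_mem.mpr (monomial_mem_span_monomial_image _ hmT)]
      exact zero_mem _
    · refine Submodule.mem_map_of_mem
        ((monomial_mem_restrictSupport k).mpr (Or.inl ⟨⟨?_, ?_⟩, hmT⟩))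
      · rw [Finsupp.degree_eq_weight_one]
        exact hp (mem_support_iff.mp hm)
      · exact mem_ideal_span_monomial_image.mp hpI m hm
  · exact mem_ideal_span_monomial_image.mpr fun m hm => (hp hm).1.2
  · intro m hm
    have hmd := (hp (mem_support_iff.mpr hm)).1.1
    rwa [Finsupp.degree_eq_weight_one] at hmd

theorem finrank_gradedPiece_span_monomial_image (B : Finset (Fin n →₀ ℕ))
    (hB : (B : Set (Fin n →₀ ℕ)) =
      {m | m.degree = d ∧ ∃ s ∈ U, s ≤ m} \ {m | ∃ s ∈ T, s ≤ m}) :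
    finrank k (gradedPiece (Ideal.span ((fun s => monomial s (1 : k)) '' T))
        (Ideal.span ((fun s => monomial s (1 : k)) '' U)) d) = B.card := by
  set f := (Ideal.Quotient.mkₐ k (Ideal.span ((fun s => monomial s (1 : k)) '' T))).toLinearMap
  have hdisj : Disjoint (restrictSupport k (B : Set (Fin n →₀ ℕ))) (LinearMap.ker f) := by
    refine Submodule.disjoint_def.mpr fun p hpB hpT => ?_
    rw [LinearMap.mem_ker, AlgHom.toLinearMap_apply, Ideal.Quotient.mkₐ_eq_mk,
      Ideal.Quotient.eq_zero_iff_mem, mem_ideal_span_monomial_image] at hpT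
    rw [← MvPolynomial.support_eq_empty, Finset.eq_empty_iff_forall_notMem]
    intro m hm
    have hmB := hpB hm
    rw [hB] at hmB
    exact hmB.2 (hpT m hm)
  rw [gradedPiece_span_monomial_image_eq_map T U d _ hB, ← LinearMap.range_domRestrict,
    LinearMap.finrank_range_of_inj (LinearMap.injective_domRestrict_iff.mpr hdisj),
    finrank_eq_card_basis (basisRestrictSupport k _)]
  simp

end MonomialIdeal

theorem add_add_pow_three_mul_mem {R : Type*} [CommRing R] {J : Ideal R} {u v w : R}
    (hu : u ^ 4 ∈ J) (hv : v ^ 4 ∈ J) (hw : w ^ 3 ∈ J) :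
    (u + v + w) ^ 3 * ((u - v) * (u ^ 2 + v ^ 2)) ∈ J := by
  have h : (u + v + w) ^ 3 * ((u - v) * (u ^ 2 + v ^ 2)) =
      ((u + v) ^ 2 + 3 * (u + v) * w + 3 * w ^ 2) * (u ^ 4 - v ^ 4) +
        (u - v) * (u ^ 2 + v ^ 2) * w ^ 3 := by ring
  rw [h]
  exact add_mem (J.mul_mem_left _ (sub_mem hu hv)) (J.mul_mem_left _ hw)

open Finset

section Example

variable {k : Type} [Field k]

local notation "𝔦" => (Ideal.span {X 0 ^ 2, X 1 ^ 2} : Ideal (MvPolynomial (Fin 3) k))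
local notation "𝔧" => (Ideal.span {X 0 ^ 4, X 1 ^ 4, X 2 ^ 3} : Ideal (MvPolynomial (Fin 3) k))

theorem span_x2_y2_eq_span_monomial_image :
    𝔦 = Ideal.span ((fun s => monomial s (1 : k)) '' {Finsupp.single 0 2, Finsupp.single 1 2}) := by
  simp [Set.image_insert_eq, X_pow_eq_monomial]

theorem span_x4_y4_z3_eq_span_monomial_image :
    𝔧 = Ideal.span ((fun s => monomial s (1 : k)) ''
      {Finsupp.single 0 4, Finsupp.single 1 4, Finsupp.single 2 3}) := by
  simp [Set.image_insert_eq, X_pow_eq_monomial]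

theorem finrank_gradedPiece_example (d : ℕ) :
    finrank k (gradedPiece 𝔧 𝔦 d) =
      #{t ∈ Fintype.piFinset fun i : Fin 3 => range (![4, 4, 3] i) |
        ∑ i, t i = d ∧ (2 ≤ t 0 ∨ 2 ≤ t 1)} := by
  rw [span_x2_y2_eq_span_monomial_image, span_x4_y4_z3_eq_span_monomial_image,
    finrank_gradedPiece_span_monomial_image _ _ d
    (Finset.map Finsupp.equivFunOnFinite.symm.toEmbedding _), card_map]
  ext m
  simp only [Fin.sum_univ_three, Fin.isValue, Nat.succ_eq_add_one, Nat.reduceAdd, coe_map,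
    Function.Embedding.coeFn_mk, coe_filter, Fintype.mem_piFinset, mem_range, Fin.forall_fin_succ,
    Matrix.cons_val_zero, Matrix.cons_val_succ, Fin.succ_zero_eq_one, Matrix.cons_val_fin_one,
    Fin.succ_one_eq_two, IsEmpty.forall_iff, and_true, Set.mem_image_equiv, Equiv.symm_symm,
    Set.mem_ofPred_eq, Finsupp.equivFunOnFinite_apply, Finsupp.degree_eq_sum, Set.mem_insert_iff,
    Set.mem_singleton_iff, exists_eq_or_imp, Finsupp.single_le_iff, existsAndEq, true_and,
    Set.mem_sdiff, not_or, not_le]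
  omega

theorem exists_eq_linearForm {ℓ : MvPolynomial (Fin 3) k}
    (hℓ : ℓ ∈ homogeneousSubmodule (Fin 3) k 1) :
    ∃ a b c : k, ℓ = C a * X 0 + C b * X 1 + C c * X 2 := by
  rw [homogeneousSubmodule_one_eq_span_X, Submodule.mem_span_range_iff_exists_fun] at hℓ
  obtain ⟨c, rfl⟩ := hℓ
  exact ⟨c 0, c 1, c 2, by simp [Fin.sum_univ_three, smul_eq_C_mul]⟩

noncomputable def kernelWitness (a b : k) : MvPolynomial (Fin 3) k :=
  (C a * X 0 - C b * X 1) * ((C a * X 0) ^ 2 + (C b * X 1) ^ 2)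

variable (a b : k)

theorem mk_kernelWitness_mem_gradedPiece :
    Ideal.Quotient.mk 𝔧 (kernelWitness a b) ∈ gradedPiece 𝔧 𝔦 3 := by
  refine mk_mem_gradedPiece (Ideal.mul_mem_left _ _ (add_mem ?_ ?_)) ?_
  · rw [mul_pow]
    exact Ideal.mul_mem_left _ _ (Ideal.subset_span (by simp))
  · rw [mul_pow]
    exact Ideal.mul_mem_left _ _ (Ideal.subset_span (by simp))
  · have hx := isHomogeneous_C_mul_X a (0 : Fin 3)
    have hy := isHomogeneous_C_mul_X b (1 : Fin 3)
    exact (hx.sub hy).mul ((hx.pow 2).add (hy.pow 2))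

theorem kernelWitness_notMem (hab : a ≠ 0 ∨ b ≠ 0) : kernelWitness a b ∉ 𝔧 := by
  have hexp : kernelWitness a b =
      C (a ^ 3) * X 0 ^ 3 - C (b ^ 3) * X 1 ^ 3 + C (a * b ^ 2) * (X 0 * X 1 ^ 2) -
        C (a ^ 2 * b) * (X 1 * X 0 ^ 2) := by
    simp only [kernelWitness, map_mul, map_pow]
    ring
  have hcoeff : coeff (Finsupp.single 0 3) (kernelWitness a b) = a ^ 3 ∧
      coeff (Finsupp.single 1 3) (kernelWitness a b) = -b ^ 3 := by
    rw [hexp]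
    constructor <;> simp only [coeff_sub, coeff_add, coeff_C_mul, coeff_X_mul', coeff_X_pow] <;>
      simp [← Finsupp.single_tsub, Finsupp.single_eq_single_iff]
  rw [span_x4_y4_z3_eq_span_monomial_image, mem_ideal_span_monomial_image]
  intro h
  rcases hab with ha | hb
  · have := h _ (mem_support_iff.mpr (hcoeff.1 ▸ pow_ne_zero 3 ha))
    simp [Finsupp.single_le_iff] at this
  · have := h _ (mem_support_iff.mpr (hcoeff.2 ▸ neg_ne_zero.mpr (pow_ne_zero 3 hb)))
    simp [Finsupp.single_le_iff] at this

theorem linearForm_pow_three_mul_kernelWitness_mem (c : k) :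
    (C a * X 0 + C b * X 1 + C c * X 2) ^ 3 * kernelWitness a b ∈ 𝔧 := by
  refine add_add_pow_three_mul_mem ?_ ?_ ?_ <;> rw [mul_pow] <;>
    exact Ideal.mul_mem_left _ _ (Ideal.subset_span (by simp))

theorem exists_mem_gradedPiece_ne_zero_mul_eq_zero (c : k) :
    ∃ x ∈ gradedPiece 𝔧 𝔦 3, x ≠ 0 ∧
      Ideal.Quotient.mk 𝔧 ((C a * X 0 + C b * X 1 + C c * X 2) ^ 3) * x = 0 := by
  by_cases hab : a = 0 ∧ b = 0
  · obtain ⟨rfl, rfl⟩ := hab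
    have hpos : 0 < finrank k (gradedPiece 𝔧 𝔦 3) := by
      rw [finrank_gradedPiece_example]
      decide
    obtain ⟨x, hx, hx0⟩ := Submodule.exists_mem_ne_zero_of_ne_bot
      (Submodule.one_le_finrank_iff.mp hpos)
    refine ⟨x, hx, hx0, ?_⟩
    rw [Ideal.Quotient.eq_zero_iff_mem.mpr, zero_mul]
    simpa [mul_pow] using Ideal.mul_mem_left _ (C c ^ 3) (Ideal.subset_span (by simp))
  · refine ⟨_, mk_kernelWitness_mem_gradedPiece a b, ?_, ?_⟩
    · rw [Ne, Ideal.Quotient.eq_zero_iff_mem]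
      exact kernelWitness_notMem a b (by tauto)
    · rw [← map_mul, Ideal.Quotient.eq_zero_iff_mem]
      exact linearForm_pow_three_mul_kernelWitness_mem a b c

end Example

theorem stmt18_general {k : Type} [Field k]
    (I J : Ideal (MvPolynomial (Fin 3) k))
    (hI : I = Ideal.span {X 0 ^ 2, X 1 ^ 2})
    (hJ : J = Ideal.span {X 0 ^ 4, X 1 ^ 4, X 2 ^ 3}) :
    Module.finrank k (gradedPiece J I 3) = 6 ∧
    Module.finrank k (gradedPiece J I 6) = 6 ∧
    Ideal.Quotient.mk J ((X 0 - X 1) * (X 0 ^ 2 + X 1 ^ 2)) ∈ gradedPiece J I 3 ∧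
    Ideal.Quotient.mk J ((X 0 - X 1) * (X 0 ^ 2 + X 1 ^ 2) : MvPolynomial (Fin 3) k) ≠ 0 ∧
    Ideal.Quotient.mk J ((X 0 + X 1 + X 2) ^ 3 * ((X 0 - X 1) * (X 0 ^ 2 + X 1 ^ 2)) :
      MvPolynomial (Fin 3) k) = 0 ∧
    ¬ HasSLP J I := by
  subst hI hJ
  have h3 : finrank k (gradedPiece _ _ 3) = 6 := (finrank_gradedPiece_example 3).trans (by decide)
  have h6 : finrank k (gradedPiece _ _ 6) = 6 := (finrank_gradedPiece_example 6).trans (by decide)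
  have hw : (X 0 - X 1) * (X 0 ^ 2 + X 1 ^ 2) = kernelWitness (1 : k) 1 := by
    simp [kernelWitness]
  refine ⟨h3, h6, hw ▸ mk_kernelWitness_mem_gradedPiece 1 1, ?_, ?_, ?_⟩
  · rw [hw, Ne, Ideal.Quotient.eq_zero_iff_mem]
    exact kernelWitness_notMem 1 1 (.inl one_ne_zero)
  · rw [hw, Ideal.Quotient.eq_zero_iff_mem]
    simpa using linearForm_pow_three_mul_kernelWitness_mem (1 : k) 1 1
  · rintro ⟨ℓ, hℓ, hsle⟩
    obtain ⟨a, b, c, rfl⟩ := exists_eq_linearForm hℓ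
    obtain ⟨x, hx, hx0, hℓx⟩ := exists_mem_gradedPiece_ne_zero_mul_eq_zero a b c
    exact not_isSLE_of_mul_eq_zero hℓ three_pos (h3.trans_le h6.ge) hx hx0 hℓx hsle

/-- **Example.** Let `k` be a field of characteristic zero, `S = k[x,y,z]`, and
`N = (x², y²)/(x⁴, y⁴, z³)`.  Then `dim_k N₃ = dim_k N₆ = 6`, and the class of
`(x−y)(x²+y²)` is a nonzero element of `N₃` killed by `(x+y+z)³`; consequently `N`
does not have the strong Lefschetz property. -/
theorem stmt18 {k : Type} [Field k] [CharZero k]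
    (I J : Ideal (MvPolynomial (Fin 3) k))
    (hI : I = Ideal.span {X 0 ^ 2, X 1 ^ 2})
    (hJ : J = Ideal.span {X 0 ^ 4, X 1 ^ 4, X 2 ^ 3}) :
    Module.finrank k (gradedPiece J I 3) = 6 ∧
    Module.finrank k (gradedPiece J I 6) = 6 ∧
    Ideal.Quotient.mk J ((X 0 - X 1) * (X 0 ^ 2 + X 1 ^ 2)) ∈ gradedPiece J I 3 ∧
    Ideal.Quotient.mk J ((X 0 - X 1) * (X 0 ^ 2 + X 1 ^ 2) : MvPolynomial (Fin 3) k) ≠ 0 ∧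
    Ideal.Quotient.mk J ((X 0 + X 1 + X 2) ^ 3 * ((X 0 - X 1) * (X 0 ^ 2 + X 1 ^ 2)) :
      MvPolynomial (Fin 3) k) = 0 ∧
    ¬ HasSLP J I :=
  stmt18_general I J hI hJ
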